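/- Let f be an SC decoder built from arbitrary functions f_i : 𝒳^{i−1} × 𝒴^n → 𝒳 for i ∈ I0, let ψ(c,y) ≡ T^{−1}(f(c,y)), and let ε ≡ Prob(ψ(AX,Y) ≠ X). If ε ≤ 1/2, then Σ_{i∈I0} H(C_i | C_1^{i−1}, Y) ≤ n·(ε + h(ε)), where H denotes conditional Shannon entropy with logarithm base |𝒳| and h(θ) ≡ −θ log_{|𝒳|} θ − (1−θ) log_{|𝒳|}(1−θ) is the binary entropy function (with h(0) = 0). -/

import Mathlib

/-!
Whenever the SC decoder recovers the whole codeword, each decision `f_i(C_1^{i-1}, Y)` with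
`i ∈ I0` equals `C_i`, so it is a guess of `C_i` from exactly the data `(C_1^{i-1}, Y)` that
`C_i` is conditioned on, wrong with probability at most `ε`. Fano's inequality then bounds
`H(C_i | C_1^{i-1}, Y)` by the `|𝒳|`-ary entropy of `ε` (monotone on `[0, 1/2]`), which is at
most `h(ε) + ε log |𝒳|`; there are at most `n` such indices.
-/

open Finset

noncomputable def probOf {Ω : Type*} [Fintype Ω] (p : Ω → ℝ) (E : Set Ω) : ℝ :=
  ∑ ω, E.indicator p ω

noncomputable def condProb {Ω : Type*} [Fintype Ω] (p : Ω → ℝ) (E F : Set Ω) : ℝ :=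
  probOf p (E ∩ F) / probOf p F

noncomputable def entropyOf {Ω Z : Type*} [Fintype Ω] [Fintype Z] (p : Ω → ℝ) (V : Ω → Z) : ℝ :=
  ∑ z, Real.negMulLog (probOf p {ω | V ω = z})

noncomputable def condEntropyOf {Ω U V : Type*} [Fintype Ω] [Fintype U] [Fintype V]
    (p : Ω → ℝ) (Uv : Ω → U) (Vv : Ω → V) : ℝ :=
  entropyOf p (fun ω => (Uv ω, Vv ω)) - entropyOf p Vv

def prefixVec {𝒳 : Type*} {n : ℕ} (c : Fin n → 𝒳) (m : ℕ) (h : m ≤ n) : Fin m → 𝒳 :=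
  fun k => c ⟨k.1, lt_of_lt_of_le k.2 h⟩

def scVecGo {𝒳 : Type*} {n : ℕ} (g : (i : Fin n) → (Fin i.1 → 𝒳) → 𝒳) :
    (k : ℕ) → k < n → 𝒳
  | k, hk => g ⟨k, hk⟩ (fun j => scVecGo g j.1 (j.2.trans hk))
termination_by k _ => k
decreasing_by exact j.2

def scVec {𝒳 : Type*} {n : ℕ} (g : (i : Fin n) → (Fin i.1 → 𝒳) → 𝒳) : Fin n → 𝒳 :=
  fun i => scVecGo g i.1 i.2

def scDec {𝒳 𝒴 : Type*} {n l : ℕ}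
    (I1 : Finset (Fin n)) (hc1 : I1.card = l)
    (f : (i : Fin n) → (Fin i.1 → 𝒳) → (Fin n → 𝒴) → 𝒳)
    (c : Fin l → 𝒳) (y : Fin n → 𝒴) : Fin n → 𝒳 :=
  scVec (fun i pref => if h : i ∈ I1 then c ((I1.orderIsoOfFin hc1).symm ⟨i, h⟩) else f i pref y)

def scDecOrd {𝒳 𝒴 : Type*} {n l : ℕ}
    (f : (i : Fin n) → (Fin i.1 → 𝒳) → (Fin n → 𝒴) → 𝒳)
    (c : Fin l → 𝒳) (y : Fin n → 𝒴) : Fin n → 𝒳 :=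
  scVec (fun i pref => if h : i.1 < l then c ⟨i.1, h⟩ else f i pref y)

open Real

section FinitePMF

variable {Ω : Type*} [Fintype Ω] {p : Ω → ℝ}

lemma probOf_nonneg (hp : ∀ ω, 0 ≤ p ω) (E : Set Ω) : 0 ≤ probOf p E :=
  sum_nonneg fun ω _ => Set.indicator_nonneg (fun ω _ => hp ω) ω

lemma probOf_mono (hp : ∀ ω, 0 ≤ p ω) {E F : Set Ω} (h : E ⊆ F) :
    probOf p E ≤ probOf p F :=
  sum_le_sum fun ω _ => Set.indicator_le_indicator_of_subset h hp ω

lemma probOf_add_probOf_compl (E : Set Ω) : probOf p E + probOf p Eᶜ = ∑ ω, p ω := by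
  simp only [probOf, ← sum_add_distrib, Set.indicator_self_add_compl_apply]

lemma probOf_compl (hp1 : ∑ ω, p ω = 1) (E : Set Ω) : probOf p Eᶜ = 1 - probOf p E := by
  rw [← hp1, ← probOf_add_probOf_compl E]
  ring

lemma sum_probOf_fiber_mul {Z : Type*} [Fintype Z] (F : Ω → Z) (φ : Z → ℝ) :
    ∑ z, probOf p {ω | F ω = z} * φ z = ∑ ω, p ω * φ (F ω) := by
  classical
  simp only [probOf, Set.indicator_apply, Set.mem_ofPred_eq, sum_mul, ite_mul, zero_mul]
  rw [sum_comm]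
  exact sum_congr rfl fun ω _ => Fintype.sum_ite_eq (F ω) fun z => p ω * φ z

lemma sum_probOf_fiber_eq_one (hp1 : ∑ ω, p ω = 1) {Z : Type*} [Fintype Z] (F : Ω → Z) :
    ∑ z, probOf p {ω | F ω = z} = 1 := by
  simpa [hp1] using sum_probOf_fiber_mul (p := p) F fun _ => 1

end FinitePMF

/-- The pointwise form of `log x ≤ x - 1` behind Gibbs' inequality. -/
lemma negMulLog_add_mul_log_le {a b s : ℝ} (ha : 0 ≤ a) (hab : a ≤ b) (hs : 0 ≤ s)
    (hs_pos : 0 < a → 0 < s) :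
    negMulLog a + a * log b ≤ b * s - a - a * log s := by
  rcases ha.eq_or_lt with rfl | ha
  · simpa using mul_nonneg (ha.trans hab) hs
  have hb : 0 < b := ha.trans_le hab
  have hs : 0 < s := hs_pos ha
  have hlog : log (b * s / a) ≤ b * s / a - 1 := log_le_sub_one_of_pos (by positivity)
  rw [log_div (by positivity) ha.ne', log_mul hb.ne' hs.ne'] at hlog
  have key := mul_le_mul_of_nonneg_left hlog ha.le
  have hcancel : a * (b * s / a - 1) = b * s - a := by field_simp
  rw [negMulLog]
  linarith

lemma qaryEntropy_le_binEntropy_add_mul_log {q : ℕ} {δ ε : ℝ} (hq : 2 ≤ q) (hδ : 0 ≤ δ)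
    (hδε : δ ≤ ε) (hε : ε ≤ 1 / 2) :
    qaryEntropy q δ ≤ binEntropy ε + ε * log q := by
  have hq' : (2 : ℝ) ≤ q := by exact_mod_cast hq
  have hε_le : ε ≤ 1 - 1 / q := by
    have : 1 / (q : ℝ) ≤ 1 / 2 := one_div_le_one_div_of_le two_pos hq'
    linarith
  calc qaryEntropy q δ ≤ qaryEntropy q ε :=
        (qaryEntropy_strictMonoOn hq).monotoneOn ⟨hδ, hδε.trans hε_le⟩ ⟨hδ.trans hδε, hε_le⟩ hδε
    _ = binEntropy ε + ε * log (q - 1) := by rw [qaryEntropy, add_comm]; push_cast; rfl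
    _ ≤ binEntropy ε + ε * log q := by gcongr <;> linarith

section Fano

variable {Ω X W : Type*} [Fintype Ω] [Fintype X]

lemma cast_card_sub_one_pos [Nontrivial X] : (0 : ℝ) < Fintype.card X - 1 := by
  have : (1 : ℝ) < Fintype.card X := by exact_mod_cast Fintype.one_lt_card
  linarith

open Classical in
/-- The conditional law of `U` given `V = v` that is extremal in Fano's inequality. -/
noncomputable def fanoWeight (g : W → X) (δ : ℝ) (z : X × W) : ℝ :=
  if z.1 = g z.2 then 1 - δ else δ / (Fintype.card X - 1)

lemma sum_mul_fanoWeight [Fintype W] [Nontrivial X] (g : W → X) (δ : ℝ) {Q : W → ℝ}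
    (hQ1 : ∑ v, Q v = 1) : ∑ z : X × W, Q z.2 * fanoWeight g δ z = 1 := by
  classical
  have hK : (Fintype.card X : ℝ) - 1 ≠ 0 := cast_card_sub_one_pos.ne'
  have hrow : ∀ v, ∑ u, fanoWeight g δ (u, v) = 1 := by
    intro v
    have hsplit : ∀ u, fanoWeight g δ (u, v) =
        δ / (Fintype.card X - 1) + if g v = u then 1 - δ - δ / (Fintype.card X - 1) else 0 := by
      intro u
      by_cases h : u = g v <;> simp [fanoWeight, h, eq_comm]
    simp only [hsplit, sum_add_distrib, sum_const, card_univ, nsmul_eq_mul, Fintype.sum_ite_eq]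
    field_simp
    ring
  rw [Fintype.sum_prod_type_right]
  simp only [← mul_sum, hrow, mul_one, hQ1]

variable {p : Ω → ℝ} (U : Ω → X) (V : Ω → W)

lemma condEntropyOf_eq_sum [Fintype W] :
    condEntropyOf p U V = ∑ z : X × W, (negMulLog (probOf p {ω | (U ω, V ω) = z}) +
      probOf p {ω | (U ω, V ω) = z} * log (probOf p {ω | V ω = z.2})) := by
  have hmarg : ∑ z : X × W, probOf p {ω | (U ω, V ω) = z} * log (probOf p {ω | V ω = z.2}) =
      ∑ v, probOf p {ω | V ω = v} * log (probOf p {ω | V ω = v}) := by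
    rw [sum_probOf_fiber_mul (fun ω => (U ω, V ω)) fun z => log (probOf p {ω | V ω = z.2}),
      sum_probOf_fiber_mul V fun v => log (probOf p {ω | V ω = v})]
  rw [condEntropyOf, entropyOf, entropyOf, sum_add_distrib, hmarg]
  simp only [negMulLog, neg_mul, sum_neg_distrib]
  ring

variable {U V} {g : W → X} {δ : ℝ}

lemma fanoWeight_nonneg [Nontrivial X] (hp0 : ∀ ω, 0 ≤ p ω) (hp1 : ∑ ω, p ω = 1)
    (hδ : probOf p {ω | g (V ω) ≠ U ω} = δ) (z : X × W) : 0 ≤ fanoWeight g δ z := by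
  unfold fanoWeight
  split_ifs
  · rw [← hδ, ← probOf_compl hp1]
    exact probOf_nonneg hp0 _
  · exact div_nonneg (hδ ▸ probOf_nonneg hp0 _) cast_card_sub_one_pos.le

lemma fanoWeight_pos [Nontrivial X] (hp0 : ∀ ω, 0 ≤ p ω) (hp1 : ∑ ω, p ω = 1)
    (hδ : probOf p {ω | g (V ω) ≠ U ω} = δ) {z : X × W}
    (hz : 0 < probOf p {ω | (U ω, V ω) = z}) : 0 < fanoWeight g δ z := by
  unfold fanoWeight
  split_ifs with h
  · rw [← hδ, ← probOf_compl hp1]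
    refine hz.trans_le (probOf_mono hp0 fun ω hω hne => hne ?_)
    simp only [Set.mem_ofPred_eq, Prod.ext_iff] at hω
    rw [hω.1, hω.2, h]
  · refine div_pos (hz.trans_le (hδ ▸ probOf_mono hp0 fun ω hω hne => h ?_))
      cast_card_sub_one_pos
    simp only [Set.mem_ofPred_eq, Prod.ext_iff] at hω
    rw [← hω.1, ← hω.2, hne]

lemma sum_probOf_mul_log_fanoWeight [Fintype W] [Nontrivial X] (hp0 : ∀ ω, 0 ≤ p ω)
    (hp1 : ∑ ω, p ω = 1)
    (hδ : probOf p {ω | g (V ω) ≠ U ω} = δ) :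
    ∑ z, probOf p {ω | (U ω, V ω) = z} * log (fanoWeight g δ z) =
      -qaryEntropy (Fintype.card X) δ := by
  set E := {ω | g (V ω) ≠ U ω}
  have hsplit : ∀ ω, p ω * log (fanoWeight g δ (U ω, V ω)) =
      E.indicator p ω * log (δ / (Fintype.card X - 1)) + Eᶜ.indicator p ω * log (1 - δ) := by
    intro ω
    by_cases h : ω ∈ E
    · rw [Set.indicator_of_mem h, Set.indicator_of_notMem (Set.notMem_compl_iff.2 h), zero_mul,
        add_zero, fanoWeight, if_neg (Ne.symm h)]
    · rw [Set.indicator_of_notMem h, Set.indicator_of_mem (Set.mem_compl h), zero_mul,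
        zero_add, fanoWeight, if_pos (not_not.1 h).symm]
  have hlog_div : δ * log (δ / (Fintype.card X - 1)) =
      δ * log δ - δ * log (Fintype.card X - 1) := by
    rcases (hδ ▸ probOf_nonneg hp0 E : 0 ≤ δ).eq_or_lt with h | h
    · simp [← h]
    · rw [log_div h.ne' cast_card_sub_one_pos.ne', mul_sub]
  rw [sum_probOf_fiber_mul (fun ω => (U ω, V ω)) fun z => log (fanoWeight g δ z),
    sum_congr rfl fun ω _ => hsplit ω, sum_add_distrib, ← sum_mul, ← sum_mul, ← probOf, ← probOf,
    probOf_compl hp1, hδ, hlog_div, qaryEntropy, binEntropy_eq_negMulLog_add_negMulLog_one_sub,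
    negMulLog, negMulLog]
  push_cast
  ring

variable (U V)

/-- Fano's inequality. -/
theorem condEntropyOf_le_qaryEntropy [Fintype W] [Nontrivial X] (hp0 : ∀ ω, 0 ≤ p ω)
    (hp1 : ∑ ω, p ω = 1) (g : W → X) :
    condEntropyOf p U V ≤ qaryEntropy (Fintype.card X) (probOf p {ω | g (V ω) ≠ U ω}) := by
  set δ := probOf p {ω | g (V ω) ≠ U ω}
  set P : X × W → ℝ := fun z => probOf p {ω | (U ω, V ω) = z}
  set Q : W → ℝ := fun v => probOf p {ω | V ω = v}
  have hPQ : ∀ z, P z ≤ Q z.2 := fun z => probOf_mono hp0 fun ω hω => congrArg Prod.snd hω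
  calc condEntropyOf p U V = ∑ z, (negMulLog (P z) + P z * log (Q z.2)) :=
        condEntropyOf_eq_sum U V
    _ ≤ ∑ z, (Q z.2 * fanoWeight g δ z - P z - P z * log (fanoWeight g δ z)) :=
        sum_le_sum fun z _ => negMulLog_add_mul_log_le (probOf_nonneg hp0 _) (hPQ z)
          (fanoWeight_nonneg hp0 hp1 rfl z) (fanoWeight_pos hp0 hp1 rfl)
    _ = qaryEntropy (Fintype.card X) δ := by
        rw [sum_sub_distrib, sum_sub_distrib,
          sum_mul_fanoWeight g δ (sum_probOf_fiber_eq_one hp1 V), sum_probOf_fiber_eq_one hp1,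
          sum_probOf_mul_log_fanoWeight hp0 hp1 rfl]
        ring

end Fano

section SuccessiveCancellation

variable {𝒳 𝒴 : Type*} {n l : ℕ}

lemma scVec_apply (g : (i : Fin n) → (Fin i.1 → 𝒳) → 𝒳) (i : Fin n) :
    scVec g i = g i (prefixVec (scVec g) i.1 i.2.le) := by
  rw [scVec, scVecGo]
  rfl

lemma scDec_apply_of_notMem {I1 : Finset (Fin n)} (hc1 : I1.card = l)
    (f : (i : Fin n) → (Fin i.1 → 𝒳) → (Fin n → 𝒴) → 𝒳) (c : Fin l → 𝒳) (y : Fin n → 𝒴)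
    {i : Fin n} (hi : i ∉ I1) :
    scDec I1 hc1 f c y i = f i (prefixVec (scDec I1 hc1 f c y) i.1 i.2.le) y := by
  rw [scDec, scVec_apply, dif_neg hi]

lemma apply_eq_of_scDec_eq {I1 : Finset (Fin n)} (hc1 : I1.card = l)
    (f : (i : Fin n) → (Fin i.1 → 𝒳) → (Fin n → 𝒴) → 𝒳) {c : Fin l → 𝒳} {y : Fin n → 𝒴}
    {x : Fin n → 𝒳} (h : scDec I1 hc1 f c y = x) {i : Fin n} (hi : i ∉ I1) :
    f i (prefixVec x i.1 i.2.le) y = x i := by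
  subst h
  exact (scDec_apply_of_notMem hc1 f c y hi).symm

lemma probOf_ne_apply_le_probOf_scDec_ne [Fintype 𝒳] [Fintype 𝒴]
    {μ : (Fin n → 𝒳) × (Fin n → 𝒴) → ℝ} (hμ0 : ∀ ω, 0 ≤ μ ω) (A : (Fin n → 𝒳) → Fin l → 𝒳)
    {I1 : Finset (Fin n)} (hc1 : I1.card = l) (T : (Fin n → 𝒳) ≃ (Fin n → 𝒳))
    (f : (i : Fin n) → (Fin i.1 → 𝒳) → (Fin n → 𝒴) → 𝒳) {i : Fin n} (hi : i ∉ I1) :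
    probOf μ {ω | f i (prefixVec (T ω.1) i.1 i.2.le) ω.2 ≠ T ω.1 i} ≤
      probOf μ {ω | T.symm (scDec I1 hc1 f (A ω.1) ω.2) ≠ ω.1} :=
  probOf_mono hμ0 fun _ hω hdec => hω (apply_eq_of_scDec_eq hc1 f (T.symm_apply_eq.mp hdec) hi)

end SuccessiveCancellation

theorem stmt9_general
    {𝒳 𝒴 : Type*} [Fintype 𝒳] [Fintype 𝒴]
    (hcard : 2 ≤ Fintype.card 𝒳)
    (n l : ℕ)
    (μ : ((Fin n → 𝒳) × (Fin n → 𝒴)) → ℝ)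
    (hμ0 : ∀ ω, 0 ≤ μ ω) (hμ1 : ∑ ω, μ ω = 1)
    (A : (Fin n → 𝒳) → (Fin l → 𝒳))
    (I1 I0 : Finset (Fin n))
    (hdisj : Disjoint I1 I0)
    (hc1 : I1.card = l)
    (T : (Fin n → 𝒳) ≃ (Fin n → 𝒳))
    (f : (i : Fin n) → (Fin i.1 → 𝒳) → (Fin n → 𝒴) → 𝒳)
    (ε : ℝ)
    (hε : ε = probOf μ {ω | T.symm (scDec I1 hc1 f (A ω.1) ω.2) ≠ ω.1})
    (hhalf : ε ≤ 1 / 2) :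
    ∑ i ∈ I0,
        condEntropyOf μ (fun ω => T ω.1 i)
          (fun ω => (prefixVec (T ω.1) i.1 i.2.le, ω.2)) /
            Real.log (Fintype.card 𝒳) ≤
      (n : ℝ) * (ε +
        (Real.negMulLog ε + Real.negMulLog (1 - ε)) / Real.log (Fintype.card 𝒳)) := by
  have : Nontrivial 𝒳 := Fintype.one_lt_card_iff_nontrivial.mp hcard
  have hlogK : 0 < log (Fintype.card 𝒳) := log_pos (by exact_mod_cast hcard)
  have hε0 : 0 ≤ ε := hε ▸ probOf_nonneg hμ0 _
  have hcoord : ∀ i ∈ I0, condEntropyOf μ (fun ω => T ω.1 i)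
      (fun ω => (prefixVec (T ω.1) i.1 i.2.le, ω.2)) ≤ binEntropy ε + ε * log (Fintype.card 𝒳) := by
    intro i hi
    have herr := probOf_ne_apply_le_probOf_scDec_ne hμ0 A hc1 T f (disjoint_right.mp hdisj hi)
    rw [← hε] at herr
    have hfano := condEntropyOf_le_qaryEntropy (fun ω => T ω.1 i)
      (fun ω => (prefixVec (T ω.1) i.1 i.2.le, ω.2)) hμ0 hμ1 fun w => f i w.1 w.2
    have hq := qaryEntropy_le_binEntropy_add_mul_log hcard (probOf_nonneg hμ0 _) herr hhalf
    exact hfano.trans hq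
  have hbound_nonneg : 0 ≤ ε + (negMulLog ε + negMulLog (1 - ε)) / log (Fintype.card 𝒳) := by
    rw [← binEntropy_eq_negMulLog_add_negMulLog_one_sub]
    exact add_nonneg hε0 (div_nonneg (binEntropy_nonneg hε0 (by linarith)) hlogK.le)
  calc _ ≤ ∑ _i ∈ I0, (ε + (negMulLog ε + negMulLog (1 - ε)) / log (Fintype.card 𝒳)) := by
        refine sum_le_sum fun i hi => ?_
        rw [div_le_iff₀ hlogK, add_mul, div_mul_cancel₀ _ hlogK.ne',
          ← binEntropy_eq_negMulLog_add_negMulLog_one_sub, add_comm]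
        exact hcoord i hi
    _ ≤ _ := by
        rw [sum_const, nsmul_eq_mul]
        gcongr
        exact_mod_cast (card_le_univ I0).trans_eq (Fintype.card_fin n)

/-- for an SC decoder built from arbitrary `f_i` (`i ∈ I0`), with
`ε = Prob(T⁻¹(f(AX,Y)) ≠ X) ≤ 1/2`, one has
`Σ_{i ∈ I0} H(C_i|C_1^{i-1},Y) ≤ n (ε + h(ε))`, entropies in base `|𝒳|`. -/
theorem stmt9
    {𝒳 𝒴 : Type*} [Fintype 𝒳] [Fintype 𝒴]
    (hcard : 2 ≤ Fintype.card 𝒳)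
    (n l : ℕ) (hl : l ≤ n)
    (μ : ((Fin n → 𝒳) × (Fin n → 𝒴)) → ℝ)
    (hμ0 : ∀ ω, 0 ≤ μ ω) (hμ1 : ∑ ω, μ ω = 1)
    (A : (Fin n → 𝒳) → (Fin l → 𝒳)) (B : (Fin n → 𝒳) → (Fin (n - l) → 𝒳))
    (I1 I0 : Finset (Fin n))
    (hdisj : Disjoint I1 I0) (huniv : I1 ∪ I0 = Finset.univ)
    (hc1 : I1.card = l) (hc0 : I0.card = n - l)
    (T : (Fin n → 𝒳) ≃ (Fin n → 𝒳))
    (hT1 : ∀ x (j : Fin l), T x (I1.orderIsoOfFin hc1 j).1 = A x j)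
    (hT0 : ∀ x (j : Fin (n - l)), T x (I0.orderIsoOfFin hc0 j).1 = B x j)
    (f : (i : Fin n) → (Fin i.1 → 𝒳) → (Fin n → 𝒴) → 𝒳)
    (ε : ℝ)
    (hε : ε = probOf μ {ω | T.symm (scDec I1 hc1 f (A ω.1) ω.2) ≠ ω.1})
    (hhalf : ε ≤ 1 / 2) :
    ∑ i ∈ I0,
        condEntropyOf μ (fun ω => T ω.1 i)
          (fun ω => (prefixVec (T ω.1) i.1 i.2.le, ω.2)) /
            Real.log (Fintype.card 𝒳) ≤
      (n : ℝ) * (ε +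
        (Real.negMulLog ε + Real.negMulLog (1 - ε)) / Real.log (Fintype.card 𝒳)) :=
  stmt9_general hcard n l μ hμ0 hμ1 A I1 I0 hdisj hc1 T f ε hε hhalf
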